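/- arXiv:math/0406508 — 7 statements merged into one kernel-verified Lean document; each statement's English description precedes it below -/
import Mathlib

section
/- Let p be a prime, A a local integral domain that is a Z_(p)-algebra whose residue field has characteristic p, and K the fraction field of A. Let M be a free A-module of finite rank, S a finite subset of Z injecting into Z/pZ, and suppose M ⊗_A K = ⊕_{i ∈ S} M_{i,K} is a direct sum decomposition of K-vector spaces. Suppose h is an A-linear endomorphism of M whose K-linear extension acts on each M_{i,K} as multiplication by the integer i. Then, setting M_i := M ∩ M_{i,K} (intersection inside M ⊗_A K), the natural map ⊕_{i ∈ S} M_i → M is an isomorphism of A-modules. -/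
open TensorProduct Polynomial

/-!
The residues of `S` mod `p` are distinct, so the differences `i - j` of distinct elements of `S`
are units of `A` and the Lagrange polynomials `Lᵢ = ∏_{j ≠ i} (X - j) / (i - j)` have
coefficients in `A`. The operators `Lᵢ(h)` on `M` extend to the projections of `K ⊗ M` onto the
`M_{i,K}`; since `M` is flat it embeds into `K ⊗ M`, so the `Lᵢ(h)` are projections of `M` onto
the `Mᵢ` summing to the identity.
-/

namespace Polynomial

variable {R ι : Type*} [CommRing R] [DecidableEq ι] [Fintype ι]

/-- `Lagrange.basis` needs a field; over a ring it is enough that the nodes differ by units. -/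
noncomputable def unitLagrangeBasis (μ : ι → R) (i : ι) : R[X] :=
  C (Ring.inverse (∏ j ∈ Finset.univ.erase i, (μ i - μ j))) *
    ∏ j ∈ Finset.univ.erase i, (X - C (μ j))

theorem eval_unitLagrangeBasis {μ : ι → R} (hμ : Pairwise fun i j => IsUnit (μ i - μ j))
    (i k : ι) : (unitLagrangeBasis μ i).eval (μ k) = if i = k then 1 else 0 := by
  simp only [unitLagrangeBasis, eval_mul, eval_C, eval_prod, eval_sub, eval_X]
  split_ifs with hik
  · subst hik
    exact Ring.inverse_mul_cancel _ <| IsUnit.prod_iff.mpr fun j hj =>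
      hμ (Finset.ne_of_mem_erase hj).symm
  · rw [Finset.prod_eq_zero (f := fun j => μ k - μ j)
      (Finset.mem_erase.mpr ⟨Ne.symm hik, Finset.mem_univ k⟩) (sub_self _), mul_zero]

end Polynomial

section

variable {R M N ι : Type*} [CommRing R] [AddCommGroup M] [Module R M]
  [AddCommGroup N] [Module R N]

theorem iSupIndep.comap_of_injective {W : ι → Submodule R N} (hW : iSupIndep W)
    {f : M →ₗ[R] N} (hf : Function.Injective f) : iSupIndep fun i => (W i).comap f := by
  intro i
  have hle : ⨆ (j) (_ : j ≠ i), (W j).comap f ≤ (⨆ (j) (_ : j ≠ i), W j).comap f :=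
    iSup₂_le fun j hj => Submodule.comap_mono (le_iSup₂ (f := fun j (_ : j ≠ i) => W j) j hj)
  refine Disjoint.mono_right hle ?_
  rw [disjoint_iff, ← Submodule.comap_inf, disjoint_iff.mp (hW i), Submodule.comap_bot,
    LinearMap.ker_eq_bot.mpr hf]

theorem LinearMap.apply_aeval_apply_of_comp_eq {f : M →ₗ[R] N} {h : Module.End R M}
    {g : Module.End R N} (hfg : g ∘ₗ f = f ∘ₗ h) (P : R[X]) (x : M) :
    f (aeval h P x) = aeval g P (f x) := by
  induction P using Polynomial.induction_on' with
  | add P Q hP hQ => simp only [map_add, LinearMap.add_apply, hP, hQ]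
  | monomial n a =>
    simp only [aeval_monomial, Module.End.mul_apply, Module.algebraMap_end_apply, map_smul]
    exact congr_arg (a • ·)
      (LinearMap.congr_fun (Module.End.commute_pow_left_of_commute hfg n) x).symm

variable [DecidableEq ι]

theorem Submodule.apply_mem_of_iSup_eq_top {W : ι → Submodule R N} (hW : iSup W = ⊤)
    {q : ι → Module.End R N} (hq : ∀ i k, ∀ y ∈ W k, q i y = if i = k then y else 0)
    (i : ι) (y : N) : q i y ∈ W i := by
  suffices LinearMap.range (q i) ≤ W i from this (LinearMap.mem_range_self _ y)
  rw [LinearMap.range_eq_map, ← hW, Submodule.map_iSup]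
  refine iSup_le fun k => Submodule.map_le_iff_le_comap.mpr fun y hy => ?_
  rw [Submodule.mem_comap, hq i k y hy]
  split_ifs with hik
  · exact hik ▸ hy
  · exact zero_mem _

variable [Fintype ι]

theorem Submodule.sum_eq_one_of_iSup_eq_top {W : ι → Submodule R N} (hW : iSup W = ⊤)
    {q : ι → Module.End R N} (hq : ∀ i k, ∀ y ∈ W k, q i y = if i = k then y else 0) :
    ∑ i, q i = 1 := by
  suffices ⊤ ≤ LinearMap.ker (∑ i, q i - 1) from
    sub_eq_zero.mp (LinearMap.ker_eq_top.mp (top_le_iff.mp this))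
  rw [← hW]
  refine iSup_le fun k y hy => ?_
  simp [hq _ k y hy]

theorem DirectSum.IsInternal.comap_of_injective {W : ι → Submodule R N}
    (hW : DirectSum.IsInternal W) {f : M →ₗ[R] N} (hf : Function.Injective f)
    {e : ι → Module.End R M} {q : ι → Module.End R N} (hfe : ∀ i x, f (e i x) = q i (f x))
    (hq : ∀ i k, ∀ y ∈ W k, q i y = if i = k then y else 0) :
    DirectSum.IsInternal fun i => (W i).comap f := by
  have htop := hW.submodule_iSup_eq_top
  have he_sum : ∀ x, ∑ i, e i x = x := fun x => hf <| by
    rw [map_sum]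
    simp only [hfe, ← LinearMap.sum_apply, Submodule.sum_eq_one_of_iSup_eq_top htop hq,
      Module.End.one_apply]
  refine DirectSum.isInternal_submodule_of_iSupIndep_of_iSup_eq_top
    (hW.submodule_iSupIndep.comap_of_injective hf) (eq_top_iff.mpr fun x _ => ?_)
  rw [← he_sum x]
  exact Submodule.sum_mem _ fun i _ => Submodule.mem_iSup_of_mem i <| by
    rw [Submodule.mem_comap, hfe]
    exact Submodule.apply_mem_of_iSup_eq_top htop hq i (f x)

theorem DirectSum.IsInternal.comap_of_apply_eq_smul {W : ι → Submodule R N}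
    (hW : DirectSum.IsInternal W) {f : M →ₗ[R] N} (hf : Function.Injective f)
    {h : Module.End R M} {g : Module.End R N} (hfg : g ∘ₗ f = f ∘ₗ h) {μ : ι → R}
    (hμ : Pairwise fun i j => IsUnit (μ i - μ j)) (hg : ∀ i, ∀ y ∈ W i, g y = μ i • y) :
    DirectSum.IsInternal fun i => (W i).comap f :=
  hW.comap_of_injective hf (e := fun i => aeval h (unitLagrangeBasis μ i))
    (fun i x => LinearMap.apply_aeval_apply_of_comp_eq hfg _ x) fun i k y hy => by
      rw [Module.End.aeval_apply_of_mem_apply_eq_smul (hg k y hy), eval_unitLagrangeBasis hμ]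
      split_ifs <;> simp

end

theorem TensorProduct.mk_one_injective {R B M : Type*} [CommRing R] [CommRing B] [Algebra R B]
    [AddCommGroup M] [Module R M] [Module.Flat R M] (hB : Function.Injective (algebraMap R B)) :
    Function.Injective (TensorProduct.mk R B M 1) := by
  have hmk : ⇑(TensorProduct.mk R B M 1) =
      (Algebra.linearMap R B).rTensor M ∘ (TensorProduct.lid R M).symm := by
    funext x
    simp
  rw [hmk]
  exact (Module.Flat.rTensor_preserves_injective_linearMap _ hB).comp
    (TensorProduct.lid R M).symm.injective

theorem isUnit_intCast_sub_of_intCast_ne {A : Type*} [CommRing A] {p : ℕ}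
    (hA : ∀ n : ℤ, ¬ (p : ℤ) ∣ n → IsUnit (n : A)) {a b : ℤ} (hab : (a : ZMod p) ≠ b) :
    IsUnit ((a : A) - b) := by
  have := hA (a - b) fun hdvd => hab ((ZMod.intCast_eq_intCast_iff_dvd_sub b a p).mpr hdvd).symm
  rwa [Int.cast_sub] at this

theorem stmt_3_general (p : ℕ)
    (A : Type*) [CommRing A]
    (hA : ∀ n : ℤ, ¬ (p : ℤ) ∣ n → IsUnit (n : A))
    (K : Type*) [Field K] [Algebra A K] [IsFractionRing A K]
    (M : Type*) [AddCommGroup M] [Module A M] [Module.Free A M]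
    (S : Finset ℤ)
    (hS : ∀ a ∈ S, ∀ b ∈ S, (a : ZMod p) = (b : ZMod p) → a = b)
    (W : S → Submodule K (K ⊗[A] M))
    (hW : DirectSum.IsInternal W)
    (h : Module.End A M)
    (hh : ∀ (i : S) (v : K ⊗[A] M), v ∈ W i →
      LinearMap.baseChange K h v = ((i : ℤ) : K) • v) :
    DirectSum.IsInternal (fun i : S =>
      (Submodule.restrictScalars A (W i)).comap (TensorProduct.mk A K M 1)) := by
  -- `hW` serves for the `A`-restrictions: `DirectSum.IsInternal` only sees the carriers.
  refine DirectSum.IsInternal.comap_of_apply_eq_smul (W := fun i => (W i).restrictScalars A) hW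
    (TensorProduct.mk_one_injective (IsFractionRing.injective A K)) (h := h)
    (g := (LinearMap.baseChange K h).restrictScalars A) (LinearMap.ext fun x => ?_)
    (μ := fun i : S => ((i : ℤ) : A)) (fun i j hij => ?_) fun i v hv => ?_
  · simp
  · exact isUnit_intCast_sub_of_intCast_ne hA fun hij' => hij (Subtype.ext (hS _ i.2 _ j.2 hij'))
  · rw [LinearMap.restrictScalars_apply, hh i v hv]
    exact (Int.cast_smul_eq_zsmul K _ v).trans (Int.cast_smul_eq_zsmul A _ v).symm

/-- Let `p` be a prime, `A` a local integral domain which is a `ℤ_(p)`-algebra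
(equivalently every integer prime to `p` is a unit in `A`) with residue field of characteristic
`p`, and `K` its fraction field.  Let `M` be a finite free `A`-module, `S ⊂ ℤ` a finite set
injecting into `ℤ/pℤ`, and suppose `M ⊗_A K = ⊕_{i ∈ S} M_{i,K}` is a direct sum decomposition
into `K`-subspaces.  Suppose `h ∈ End_A(M)` is such that its `K`-linear extension acts on each
`M_{i,K}` as multiplication by `i`.  Then, with `M_i := M ∩ M_{i,K}` (the preimage of `M_{i,K}`
under `M → M ⊗_A K`), the natural map `⊕_{i ∈ S} M_i → M` is an isomorphism, i.e. the `M_i`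
form an internal direct sum decomposition of `M`. -/
theorem stmt_3 (p : ℕ) (hp : p.Prime)
    (A : Type*) [CommRing A] [IsDomain A] [IsLocalRing A]
    (hA : ∀ n : ℤ, ¬ (p : ℤ) ∣ n → IsUnit (n : A))
    (hres : CharP (IsLocalRing.ResidueField A) p)
    (K : Type*) [Field K] [Algebra A K] [IsFractionRing A K]
    (M : Type*) [AddCommGroup M] [Module A M] [Module.Free A M] [Module.Finite A M]
    (S : Finset ℤ)
    (hS : ∀ a ∈ S, ∀ b ∈ S, (a : ZMod p) = (b : ZMod p) → a = b)
    (W : S → Submodule K (K ⊗[A] M))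
    (hW : DirectSum.IsInternal W)
    (h : Module.End A M)
    (hh : ∀ (i : S) (v : K ⊗[A] M), v ∈ W i →
      LinearMap.baseChange K h v = ((i : ℤ) : K) • v) :
    DirectSum.IsInternal (fun i : S =>
      (Submodule.restrictScalars A (W i)).comap (TensorProduct.mk A K M 1)) :=
  stmt_3_general p A hA K M S hS W hW h hh
end

section
/- Let A be a commutative ring, J an ideal of A with J² = 0, and g a Lie algebra over A that is free of finite rank as an A-module. Let σ̄ be a Lie algebra automorphism of g/Jg and σ0 : g → g an A-linear automorphism lifting σ̄. Define θ : g × g → Jg by θ(x,y) := [σ0(x), σ0(y)] − σ0([x,y]). Regard Jg as a g-module via z · v := [σ0(z), v]. Then θ is an alternating 2-cocycle: for all x, y, z ∈ g one has x·θ(y,z) − y·θ(x,z) + z·θ(x,y) − θ([x,y],z) + θ([x,z],y) − θ([y,z],x) = 0. -/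
private theorem jac3 (L : Type*) [LieRing L] (x y z : L) :
    ⁅x, ⁅y, z⁆⁆ - ⁅y, ⁅x, z⁆⁆ + ⁅z, ⁅x, y⁆⁆ = 0 := by
  have h := lie_jacobi x y z
  rw [← lie_skew z x, lie_neg] at h
  linear_combination (norm := abel) h

/-- Let `A` be a commutative ring, `J` an ideal with `J² = 0`, and `g` a Lie algebra
over `A`, free of finite rank as an `A`-module.  Let `σ0 : g ≃ g` be an `A`-linear automorphism
whose reduction modulo `Jg` is a Lie algebra automorphism, and define
`θ(x,y) := ⁅σ0 x, σ0 y⁆ − σ0 ⁅x,y⁆`.  Regarding `Jg` as a `g`-module via `z · v := ⁅σ0 z, v⁆`,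
the map `θ` is an alternating 2-cocycle with values in `Jg`:
`x·θ(y,z) − y·θ(x,z) + z·θ(x,y) − θ(⁅x,y⁆,z) + θ(⁅x,z⁆,y) − θ(⁅y,z⁆,x) = 0`. -/
theorem stmt_8 (A : Type*) [CommRing A] (J : Ideal A) (hJ : J * J = ⊥)
    (g : Type*) [LieRing g] [LieAlgebra A g] [Module.Free A g] [Module.Finite A g]
    (σ0 : g ≃ₗ[A] g)
    (hred : ∀ x y : g, σ0 ⁅x, y⁆ - ⁅σ0 x, σ0 y⁆ ∈ J • (⊤ : Submodule A g))
    (θ : g → g → g)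
    (hθ : ∀ x y : g, θ x y = ⁅σ0 x, σ0 y⁆ - σ0 ⁅x, y⁆) :
    (∀ x y : g, θ x y ∈ J • (⊤ : Submodule A g)) ∧
    (∀ x : g, θ x x = 0) ∧
    (∀ x y z : g,
      ⁅σ0 x, θ y z⁆ - ⁅σ0 y, θ x z⁆ + ⁅σ0 z, θ x y⁆
        - θ ⁅x, y⁆ z + θ ⁅x, z⁆ y - θ ⁅y, z⁆ x = 0) := by
  refine ⟨fun x y => ?_, fun x => by simp [hθ], fun x y z => ?_⟩
  · have h2 : -(σ0 ⁅x, y⁆ - ⁅σ0 x, σ0 y⁆) ∈ J • (⊤ : Submodule A g) :=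
      Submodule.neg_mem _ (hred x y)
    rw [hθ]
    simpa using h2
  · simp only [hθ]
    have j1 := jac3 g (σ0 x) (σ0 y) (σ0 z)
    have hlie : ⁅⁅x, y⁆, z⁆ - ⁅⁅x, z⁆, y⁆ + ⁅⁅y, z⁆, x⁆ = (0 : g) := by
      rw [← lie_skew ⁅x, y⁆ z, ← lie_skew ⁅x, z⁆ y, ← lie_skew ⁅y, z⁆ x]
      linear_combination (norm := abel) - jac3 g x y z
    have hinner : σ0 ⁅⁅x, y⁆, z⁆ - σ0 ⁅⁅x, z⁆, y⁆ + σ0 ⁅⁅y, z⁆, x⁆ = 0 := by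
      have := congrArg σ0 hlie
      simpa [map_sub, map_add] using this
    have s1 : ⁅σ0 ⁅x, y⁆, σ0 z⁆ = -⁅σ0 z, σ0 ⁅x, y⁆⁆ := (lie_skew _ _).symm
    have s2 : ⁅σ0 ⁅x, z⁆, σ0 y⁆ = -⁅σ0 y, σ0 ⁅x, z⁆⁆ := (lie_skew _ _).symm
    have s3 : ⁅σ0 ⁅y, z⁆, σ0 x⁆ = -⁅σ0 x, σ0 ⁅y, z⁆⁆ := (lie_skew _ _).symm
    simp only [lie_sub, s1, s2, s3]
    linear_combination (norm := abel) j1 + hinner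
end

section
/- Let A be a commutative ring, J an ideal with J² = 0, and g a Lie algebra over A, free as an A-module. Let σ0 : g → g be an A-linear automorphism whose reduction mod Jg is a Lie algebra automorphism, set θ(x,y) := [σ0(x), σ0(y)] − σ0([x,y]) ∈ Jg, and make Jg a g-module via z·v := [σ0(z), v]. Suppose δ : g → Jg is an A-linear map with θ(x,y) = x·δ(y) − y·δ(x) − δ([x,y]) for all x,y ∈ g. Then σ : g → g defined by σ(x) := σ0(x) − δ(x) is a Lie algebra automorphism of g lifting the given automorphism of g/Jg. -/
section Aux

variable {A : Type*} [CommRing A] {g : Type*} [LieRing g] [LieAlgebra A g]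

lemma aux_map_mem_smul_top (J : Ideal A) (f : g →ₗ[A] g) {v : g}
    (hv : v ∈ J • (⊤ : Submodule A g)) : f v ∈ J • (⊤ : Submodule A g) := by
  have : f v ∈ Submodule.map f (J • (⊤ : Submodule A g)) := Submodule.mem_map_of_mem hv
  rw [Submodule.map_smul''] at this
  exact Submodule.smul_mono le_rfl le_top this

lemma aux_linmap_deep (J : Ideal A) (hJ : J * J = ⊥) (f : g →ₗ[A] g)
    (hf : ∀ v : g, f v ∈ J • (⊤ : Submodule A g)) {v : g}
    (hv : v ∈ J • (⊤ : Submodule A g)) : f v = 0 := by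
  have key : f v ∈ (J * J) • (⊤ : Submodule A g) := by
    refine Submodule.smul_induction_on hv ?_ ?_
    · intro a ha x _
      rw [map_smul, ← Ideal.smul_eq_mul, Submodule.smul_assoc]
      exact Submodule.smul_mem_smul ha (hf x)
    · intro x y hx hy
      rw [map_add]
      exact Submodule.add_mem _ hx hy
  rw [hJ, Submodule.bot_smul, Submodule.mem_bot] at key
  exact key

lemma aux_bracket_zero (J : Ideal A) (hJ : J * J = ⊥) {u v : g}
    (hu : u ∈ J • (⊤ : Submodule A g)) (hv : v ∈ J • (⊤ : Submodule A g)) :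
    ⁅u, v⁆ = 0 := by
  have key : ⁅u, v⁆ ∈ (J * J) • (⊤ : Submodule A g) := by
    refine Submodule.smul_induction_on hu ?_ ?_
    · intro a ha x _
      rw [smul_lie, ← Ideal.smul_eq_mul, Submodule.smul_assoc]
      refine Submodule.smul_mem_smul ha ?_
      have := aux_map_mem_smul_top J (LieDerivation.ad A g x).toLinearMap hv
      simpa using this
    · intro x y hx hy
      rw [add_lie]
      exact Submodule.add_mem _ hx hy
  rw [hJ, Submodule.bot_smul, Submodule.mem_bot] at key
  exact key

end Aux

/-- Let `A` be a commutative ring, `J` an ideal with `J² = 0`, and `g` a Lie algebra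
over `A`, free as an `A`-module.  Let `σ0 : g ≃ g` be an `A`-linear automorphism whose reduction
mod `Jg` is a Lie algebra automorphism (i.e. `θ(x,y) := ⁅σ0 x, σ0 y⁆ − σ0 ⁅x,y⁆ ∈ Jg`), and
suppose `δ : g → Jg` is `A`-linear with `θ(x,y) = x·δ(y) − y·δ(x) − δ(⁅x,y⁆)`, where
`z·v = ⁅σ0 z, v⁆`.  Then `σ(x) := σ0(x) − δ(x)` is a Lie algebra automorphism of `g`
(a bijective bracket-preserving `A`-linear map) lifting the given automorphism of `g/Jg`
(i.e. `σ ≡ σ0` mod `Jg`). -/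
theorem stmt_9 (A : Type*) [CommRing A] (J : Ideal A) (hJ : J * J = ⊥)
    (g : Type*) [LieRing g] [LieAlgebra A g] [Module.Free A g]
    (σ0 : g ≃ₗ[A] g)
    (θ : g → g → g)
    (hθ : ∀ x y : g, θ x y = ⁅σ0 x, σ0 y⁆ - σ0 ⁅x, y⁆)
    (hred : ∀ x y : g, θ x y ∈ J • (⊤ : Submodule A g))
    (δ : g →ₗ[A] g)
    (hδJ : ∀ v : g, δ v ∈ J • (⊤ : Submodule A g))
    (hcob : ∀ x y : g, θ x y = ⁅σ0 x, δ y⁆ - ⁅σ0 y, δ x⁆ - δ ⁅x, y⁆)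
    (σ : g → g) (hσ : ∀ x : g, σ x = σ0 x - δ x) :
    IsLinearMap A σ ∧ Function.Bijective σ ∧
    (∀ x y : g, σ ⁅x, y⁆ = ⁅σ x, σ y⁆) ∧
    (∀ x : g, σ x - σ0 x ∈ J • (⊤ : Submodule A g)) := by
  -- N := σ0⁻¹ ∘ δ
  set N : g →ₗ[A] g := σ0.symm.toLinearMap ∘ₗ δ with hN
  have hNJ : ∀ v : g, N v ∈ J • (⊤ : Submodule A g) := fun v =>
    aux_map_mem_smul_top J σ0.symm.toLinearMap (hδJ v)
  have hδdeep : ∀ v : g, v ∈ J • (⊤ : Submodule A g) → δ v = 0 :=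
    fun v hv => aux_linmap_deep J hJ δ hδJ hv
  have hNN : ∀ x : g, N (N x) = 0 := by
    intro x
    have h2 : N (N x) = σ0.symm (δ (N x)) := rfl
    rw [h2, hδdeep _ (hNJ x), map_zero]
  refine ⟨?_, ?_, ?_, ?_⟩
  · exact ⟨fun x y => by simp [hσ, map_add]; abel,
      fun a x => by simp [hσ, map_smul, smul_sub]⟩
  · rw [Function.bijective_iff_has_inverse]
    refine ⟨fun y => σ0.symm y + N (σ0.symm y), ?_, ?_⟩
    · intro x
      have h1 : σ0.symm (σ x) = x - N x := by
        rw [hσ, map_sub]; simp [hN]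
      show σ0.symm (σ x) + N (σ0.symm (σ x)) = x
      rw [h1, map_sub, hNN]
      abel
    · intro y
      have hσ0N : σ0 (N (σ0.symm y)) = δ (σ0.symm y) := by simp [hN]
      show σ (σ0.symm y + N (σ0.symm y)) = y
      rw [hσ, map_add, hσ0N, map_add, hδdeep _ (hNJ (σ0.symm y))]
      simp
  · intro x y
    have key : ⁅σ0 x, σ0 y⁆ - σ0 ⁅x, y⁆ = ⁅σ0 x, δ y⁆ - ⁅σ0 y, δ x⁆ - δ ⁅x, y⁆ :=
      (hθ x y).symm.trans (hcob x y)
    have key' : ⁅σ0 x, σ0 y⁆ =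
        σ0 ⁅x, y⁆ + (⁅σ0 x, δ y⁆ - ⁅σ0 y, δ x⁆ - δ ⁅x, y⁆) := by
      rw [← key]; abel
    have hzero : ⁅(δ x : g), (δ y : g)⁆ = 0 := aux_bracket_zero J hJ (hδJ x) (hδJ y)
    have hskew : ⁅(δ x : g), σ0 y⁆ = -⁅σ0 y, δ x⁆ := (lie_skew _ _).symm
    rw [hσ, hσ, hσ, lie_sub, sub_lie, sub_lie, hzero, hskew, key']
    abel
  · intro x
    rw [hσ]
    have : σ0 x - δ x - σ0 x = -(δ x) := by abel
    rw [this]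
    exact Submodule.neg_mem _ (hδJ x)
end

section
/- Let A be a commutative ring, J an ideal of A with J² = 0, and g a Lie algebra over A that is free of finite rank as an A-module and whose Killing form is perfect. Then every Lie algebra automorphism of g/Jg lifts to a Lie algebra automorphism of g. -/
open Finset Module

section
variable {A : Type*} [CommRing A] (J : Ideal A) {g : Type*} [LieRing g] [LieAlgebra A g]
  (I : LieIdeal A g)

theorem aux_hZ (hJ : J * J = ⊥) (hI : I.toSubmodule = J • (⊤ : Submodule A g))
    {a : A} (ha : a ∈ J) {m : g} (hm : m ∈ I) : a • m = 0 := by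
  have hm' : m ∈ J • (⊤ : Submodule A g) := hI ▸ hm
  refine Submodule.smul_induction_on hm' (fun r hr n _ => ?_) (fun x y hx hy => ?_)
  · rw [smul_smul]
    have : a * r ∈ J * J := Ideal.mul_mem_mul ha hr
    rw [hJ] at this
    rw [Ideal.mem_bot.mp this, zero_smul]
  · rw [smul_add, hx, hy, add_zero]

theorem aux_L2 (hJ : J * J = ⊥) (hI : I.toSubmodule = J • (⊤ : Submodule A g))
    {m u : g} (hm : m ∈ I) (hu : u ∈ I) : ⁅m, u⁆ = 0 := by
  have hm' : m ∈ J • (⊤ : Submodule A g) := hI ▸ hm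
  refine Submodule.smul_induction_on hm' (fun r hr n _ => ?_) (fun x y hx hy => ?_)
  · rw [smul_lie, aux_hZ J I hJ hI hr (I.lie_mem hu)]
  · rw [add_lie, hx, hy, add_zero]

end


section
variable {A : Type*} [CommRing A] {g : Type*} [LieRing g] [LieAlgebra A g]
  [Module.Free A g] [Module.Finite A g]

variable (hperf : Function.Bijective (killingForm A g))

noncomputable def kEquiv (hperf : Function.Bijective (killingForm A g)) :
    g ≃ₗ[A] (g →ₗ[A] A) := LinearEquiv.ofBijective (killingForm A g) hperf

noncomputable abbrev bb : Basis (Module.Free.ChooseBasisIndex A g) A g := Module.Free.chooseBasis A g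

noncomputable def cc (hperf : Function.Bijective (killingForm A g)) :
    Module.Free.ChooseBasisIndex A g → g :=
  fun i => (kEquiv hperf).symm ((bb (A := A) (g := g)).coord i)

theorem hc (i : Module.Free.ChooseBasisIndex A g) (x : g) :
    killingForm A g (cc hperf i) x = (bb (A := A) (g := g)).coord i x := by
  have : killingForm A g (cc hperf i) = (bb (A := A) (g := g)).coord i := by
    simpa [cc, kEquiv] using (kEquiv hperf).apply_symm_apply ((bb (A := A) (g := g)).coord i)
  rw [this]

-- expansion in basis b with coefficients K(c i, z)
theorem hexp (z : g) : ∑ i, killingForm A g (cc hperf i) z • bb (A := A) (g := g) i = z := by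
  simp only [hc hperf]
  exact (bb (A := A) (g := g)).sum_repr z

-- expansion z = Σ K z (b i) • c i
theorem hexp2 (z : g) : ∑ i, killingForm A g z (bb (A := A) (g := g) i) • cc hperf i = z := by
  apply hperf.injective
  apply (bb (A := A) (g := g)).ext
  intro j
  simp only [map_sum, map_smul, LinearMap.sum_apply, LinearMap.smul_apply, hc hperf,
    Basis.coord_apply, Basis.repr_self]
  rw [Finset.sum_eq_single j]
  · simp
  · intro i _ hij
    simp [Finsupp.single_apply, Ne.symm hij]
  · simp

theorem trace_eq_sum_repr' (f : g →ₗ[A] g) :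
    LinearMap.trace A g f
      = ∑ i, (bb (A := A) (g := g)).repr (f (bb (A := A) (g := g) i)) i := by
  rw [LinearMap.trace_eq_matrix_trace A (bb (A := A) (g := g)), Matrix.trace]
  simp [Matrix.diag, LinearMap.toMatrix_apply, bb]

theorem casimir (x : g) :
    ∑ i, ⁅cc hperf i, ⁅bb (A := A) (g := g) i, x⁆⁆ = x := by
  apply hperf.injective
  apply LinearMap.ext
  intro y
  rw [map_sum, LinearMap.sum_apply]
  have step : ∀ i, killingForm A g ⁅cc hperf i, ⁅bb (A := A) (g := g) i, x⁆⁆ y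
      = (bb (A := A) (g := g)).repr ((LieAlgebra.ad A g y ∘ₗ LieAlgebra.ad A g x)
          (bb (A := A) (g := g) i)) i := by
    intro i
    rw [LieModule.traceForm_apply_lie_apply, hc hperf, Basis.coord_apply]
    congr 2
    simp only [LinearMap.comp_apply, LieAlgebra.ad_apply]
    rw [← lie_skew x (bb (A := A) (g := g) i), lie_neg, lie_skew]
  simp only [step]
  rw [← trace_eq_sum_repr', ← killingForm_apply_apply,
    LieModule.traceForm_comm]

theorem inv_lemma {M : Type*} [AddCommGroup M] [Module A M]
    (F : g →ₗ[A] g →ₗ[A] M) (x : g) :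
    ∑ i, F ⁅x, cc hperf i⁆ (bb (A := A) (g := g) i)
      = - ∑ i, F (cc hperf i) ⁅x, bb (A := A) (g := g) i⁆ := by
  have L : ∀ i, F ⁅x, cc hperf i⁆ (bb (A := A) (g := g) i)
      = ∑ j, killingForm A g ⁅x, cc hperf i⁆ (bb (A := A) (g := g) j)
          • F (cc hperf j) (bb (A := A) (g := g) i) := by
    intro i
    conv_lhs => rw [← hexp2 hperf ⁅x, cc hperf i⁆]
    simp
  have R : ∀ i, F (cc hperf i) ⁅x, bb (A := A) (g := g) i⁆
      = ∑ j, killingForm A g (cc hperf j) ⁅x, bb (A := A) (g := g) i⁆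
          • F (cc hperf i) (bb (A := A) (g := g) j) := by
    intro i
    conv_lhs => rw [← hexp hperf ⁅x, bb (A := A) (g := g) i⁆]
    simp
  rw [Finset.sum_congr rfl fun i _ => L i, Finset.sum_congr rfl fun i _ => R i,
    Finset.sum_comm, ← Finset.sum_neg_distrib]
  refine Finset.sum_congr rfl fun i _ => ?_
  rw [← Finset.sum_neg_distrib]
  refine Finset.sum_congr rfl fun j _ => ?_
  rw [LieModule.traceForm_apply_lie_apply' A g g x (cc hperf j) (bb (A := A) (g := g) i),
    neg_smul]

end

section
variable {A : Type*} [CommRing A] {g : Type*} [LieRing g] [LieAlgebra A g]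

-- Jacobi in the convenient form
theorem jac1 (a b c : g) : ⁅a,⁅b,c⁆⁆ - ⁅b,⁅a,c⁆⁆ + ⁅c,⁅a,b⁆⁆ = 0 := by
  rw [← lie_lie, ← lie_skew ⁅a, b⁆ c, neg_add_cancel]

theorem jac2 (x y z : g) : ⁅⁅x,y⁆,z⁆ - ⁅⁅x,z⁆,y⁆ + ⁅⁅y,z⁆,x⁆ = 0 := by
  have h := jac1 x y z
  rw [← lie_skew ⁅x,y⁆ z, ← lie_skew ⁅x,z⁆ y, ← lie_skew ⁅y,z⁆ x]
  calc -⁅z,⁅x,y⁆⁆ - -⁅y,⁅x,z⁆⁆ + -⁅x,⁅y,z⁆⁆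
      = -(⁅x,⁅y,z⁆⁆ - ⁅y,⁅x,z⁆⁆ + ⁅z,⁅x,y⁆⁆) := by abel
    _ = 0 := by rw [h, neg_zero]

end

section
variable {A : Type*} [CommRing A] {g : Type*} [LieRing g] [LieAlgebra A g]

theorem coc (s : g →ₗ[A] g) (x y z : g) :
    ⁅s x, ⁅s y, s z⁆ - s ⁅y,z⁆⁆ - ⁅s y, ⁅s x, s z⁆ - s ⁅x,z⁆⁆ + ⁅s z, ⁅s x, s y⁆ - s ⁅x,y⁆⁆
      - (⁅s ⁅x,y⁆, s z⁆ - s ⁅⁅x,y⁆,z⁆) + (⁅s ⁅x,z⁆, s y⁆ - s ⁅⁅x,z⁆,y⁆)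
      - (⁅s ⁅y,z⁆, s x⁆ - s ⁅⁅y,z⁆,x⁆) = 0 := by
  have h1 := jac1 (s x) (s y) (s z)
  have h2 : s ⁅⁅x,y⁆,z⁆ - s ⁅⁅x,z⁆,y⁆ + s ⁅⁅y,z⁆,x⁆ = 0 := by
    rw [← map_sub, ← map_add, jac2, map_zero]
  calc ⁅s x, ⁅s y, s z⁆ - s ⁅y,z⁆⁆ - ⁅s y, ⁅s x, s z⁆ - s ⁅x,z⁆⁆ + ⁅s z, ⁅s x, s y⁆ - s ⁅x,y⁆⁆
      - (⁅s ⁅x,y⁆, s z⁆ - s ⁅⁅x,y⁆,z⁆) + (⁅s ⁅x,z⁆, s y⁆ - s ⁅⁅x,z⁆,y⁆)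
      - (⁅s ⁅y,z⁆, s x⁆ - s ⁅⁅y,z⁆,x⁆)
      = (⁅s x,⁅s y,s z⁆⁆ - ⁅s y,⁅s x,s z⁆⁆ + ⁅s z,⁅s x,s y⁆⁆)
        + (s ⁅⁅x,y⁆,z⁆ - s ⁅⁅x,z⁆,y⁆ + s ⁅⁅y,z⁆,x⁆) := by
        simp only [lie_sub]
        rw [← lie_skew (s ⁅x,y⁆) (s z), ← lie_skew (s ⁅x,z⁆) (s y), ← lie_skew (s ⁅y,z⁆) (s x)]
        abel
    _ = 0 := by rw [h1, h2, add_zero]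

end

section
open Module

theorem lift_aux (A : Type*) [CommRing A] (J : Ideal A) (hJ : J * J = ⊥)
    (g : Type*) [LieRing g] [LieAlgebra A g] [Module.Free A g] [Module.Finite A g]
    (hperf : Function.Bijective (killingForm A g))
    (I : LieIdeal A g) (hI : I.toSubmodule = J • (⊤ : Submodule A g))
    (σb : (g ⧸ I) ≃ₗ⁅A⁆ (g ⧸ I)) :
    ∃ σ : g →ₗ[A] g, (∀ x y : g, ⁅σ x, σ y⁆ = σ ⁅x, y⁆) ∧
      ∀ x : g, (LieSubmodule.Quotient.mk (N := I) (σ x))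
        = σb (LieSubmodule.Quotient.mk (N := I) x) := by
  classical
  set π : g → (g ⧸ I) := fun x => LieSubmodule.Quotient.mk (N := I) x with hπ
  -- a set-theoretic section of π
  have hsurj : Function.Surjective π := Submodule.Quotient.mk_surjective I.toSubmodule
  set lift : (g ⧸ I) → g := fun q => (hsurj q).choose with hlift
  have hlift_spec : ∀ q, π (lift q) = q := fun q => (hsurj q).choose_spec
  set B : Basis (Free.ChooseBasisIndex A g) A g := bb (A := A) (g := g) with hB
  set c : Free.ChooseBasisIndex A g → g := cc hperf with hcdef
  -- the linear lift σ0
  set σ0 : g →ₗ[A] g := B.constr A fun i => lift (σb (π (B i))) with hσ0def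
  have hσ0 : ∀ x, π (σ0 x) = σb (π x) := by
    have h : (I : Submodule A g).mkQ ∘ₗ σ0
        = (σb.toLinearEquiv : (g ⧸ I) →ₗ[A] (g ⧸ I)) ∘ₗ (I : Submodule A g).mkQ := by
      apply B.ext
      intro i
      simp only [LinearMap.comp_apply, Submodule.mkQ_apply, hσ0def, Basis.constr_basis]
      show π (lift (σb (π (B i)))) = σb.toLinearEquiv (π (B i))
      rw [hlift_spec]
      rfl
    intro x
    have h2 := LinearMap.congr_fun h x
    simp only [LinearMap.comp_apply, Submodule.mkQ_apply] at h2
    exact h2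
  -- θ, the obstruction cocycle, with values in I
  set θ : g → g → g := fun x y => ⁅σ0 x, σ0 y⁆ - σ0 ⁅x, y⁆ with hθdef
  have hθI : ∀ x y, θ x y ∈ I := by
    intro x y
    rw [← LieSubmodule.Quotient.mk_eq_zero' (N := I)]
    show π (⁅σ0 x, σ0 y⁆ - σ0 ⁅x, y⁆) = 0
    have hsub : π (⁅σ0 x, σ0 y⁆ - σ0 ⁅x, y⁆) = π ⁅σ0 x, σ0 y⁆ - π (σ0 ⁅x, y⁆) :=
      Submodule.Quotient.mk_sub _
    rw [hsub]
    have h1 : π ⁅σ0 x, σ0 y⁆ = ⁅π (σ0 x), π (σ0 y)⁆ :=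
      LieSubmodule.Quotient.mk_bracket I _ _
    rw [h1, hσ0 x, hσ0 y, ← LieEquiv.map_lie σb,
      show (⁅π x, π y⁆ : g ⧸ I) = π ⁅x, y⁆ from (LieSubmodule.Quotient.mk_bracket I x y).symm,
      hσ0 ⁅x, y⁆, sub_self]
  have hθanti : ∀ x y, θ x y = - θ y x := by
    intro x y
    simp only [hθdef]
    rw [← lie_skew (σ0 x) (σ0 y), ← lie_skew x y, map_neg]
    abel
  -- module law for the twisted action
  have hML : ∀ (x u : g) (m : g), m ∈ I →
      ⁅σ0 x, ⁅σ0 u, m⁆⁆ = ⁅σ0 u, ⁅σ0 x, m⁆⁆ + ⁅σ0 ⁅x, u⁆, m⁆ := by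
    intro x u m hm
    have h0 : ⁅θ x u, m⁆ = 0 := aux_L2 J I hJ hI (hθI x u) hm
    have : ⁅⁅σ0 x, σ0 u⁆, m⁆ = ⁅σ0 ⁅x, u⁆, m⁆ := by
      have : ⁅σ0 x, σ0 u⁆ = θ x u + σ0 ⁅x, u⁆ := by simp [hθdef]
      rw [this, add_lie, h0, zero_add]
    rw [leibniz_lie (σ0 x) (σ0 u) m, this]
    abel
  -- twisted Casimir acts as identity on I
  have hπsum : ∀ (f : Free.ChooseBasisIndex A g → g),
      π (∑ i, f i) = ∑ i, π (f i) := by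
    intro f
    show (I : Submodule A g).mkQ _ = _
    rw [map_sum]
    rfl
  have hmod : ∀ z, π (∑ i, ⁅σ0 (c i), ⁅σ0 (B i), z⁆⁆) = π z := by
    intro z
    have hyspec : π (lift (σb.symm (π z))) = σb.symm (π z) := hlift_spec _
    set y : g := lift (σb.symm (π z)) with hy
    have hz : π z = σb (π y) := by rw [hyspec]; simp
    have term : ∀ i, π ⁅σ0 (c i), ⁅σ0 (B i), z⁆⁆ = σb (π ⁅c i, ⁅B i, y⁆⁆) := by
      intro i
      rw [show π ⁅σ0 (c i), ⁅σ0 (B i), z⁆⁆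
            = ⁅π (σ0 (c i)), π ⁅σ0 (B i), z⁆⁆ from LieSubmodule.Quotient.mk_bracket I _ _,
        show π ⁅σ0 (B i), z⁆ = ⁅π (σ0 (B i)), π z⁆ from LieSubmodule.Quotient.mk_bracket I _ _,
        hσ0, hσ0, hz,
        show π ⁅c i, ⁅B i, y⁆⁆ = ⁅π (c i), π ⁅B i, y⁆⁆ from LieSubmodule.Quotient.mk_bracket I _ _,
        show π ⁅B i, y⁆ = ⁅π (B i), π y⁆ from LieSubmodule.Quotient.mk_bracket I _ _,
        LieEquiv.map_lie σb, LieEquiv.map_lie σb]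
    rw [hπsum]
    calc ∑ i, π ⁅σ0 (c i), ⁅σ0 (B i), z⁆⁆ = ∑ i, σb (π ⁅c i, ⁅B i, y⁆⁆) := by
          exact Finset.sum_congr rfl fun i _ => term i
      _ = σb (∑ i, π ⁅c i, ⁅B i, y⁆⁆) := by
          rw [show (⇑σb : (g ⧸ I) → (g ⧸ I)) = ⇑σb.toLinearEquiv from rfl, ← map_sum]
      _ = σb (π (∑ i, ⁅c i, ⁅B i, y⁆⁆)) := by rw [hπsum]
      _ = σb (π y) := by rw [casimir hperf y]
      _ = π z := hz.symm
  have hTCAS : ∀ m ∈ I, ∑ i, ⁅σ0 (c i), ⁅σ0 (B i), m⁆⁆ = m := by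
    intro m hm
    have hm' : m ∈ J • (⊤ : Submodule A g) := hI ▸ hm
    refine Submodule.smul_induction_on hm' ?_ ?_
    · intro a ha u _
      have h1 : ∑ i, ⁅σ0 (c i), ⁅σ0 (B i), a • u⁆⁆
          = a • ∑ i, ⁅σ0 (c i), ⁅σ0 (B i), u⁆⁆ := by
        rw [Finset.smul_sum]
        exact Finset.sum_congr rfl fun i _ => by rw [lie_smul, lie_smul]
      have h2 : (∑ i, ⁅σ0 (c i), ⁅σ0 (B i), u⁆⁆) - u ∈ I := by
        rw [← LieSubmodule.Quotient.mk_eq_zero' (N := I)]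
        show π _ = 0
        rw [show π ((∑ i, ⁅σ0 (c i), ⁅σ0 (B i), u⁆⁆) - u)
              = π (∑ i, ⁅σ0 (c i), ⁅σ0 (B i), u⁆⁆) - π u from Submodule.Quotient.mk_sub _,
          hmod u, sub_self]
      have h3 := aux_hZ J I hJ hI ha h2
      rw [smul_sub] at h3
      rw [h1]
      exact eq_of_sub_eq_zero h3
    · intro v w hv hw
      have : ∀ i, ⁅σ0 (c i), ⁅σ0 (B i), v + w⁆⁆
          = ⁅σ0 (c i), ⁅σ0 (B i), v⁆⁆ + ⁅σ0 (c i), ⁅σ0 (B i), w⁆⁆ := by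
        intro i; rw [lie_add, lie_add]
      rw [Finset.sum_congr rfl fun i _ => this i, Finset.sum_add_distrib, hv, hw]
  -- the coboundary correction η
  set η : g →ₗ[A] g := ∑ i, (LieAlgebra.ad A g (σ0 (c i))) ∘ₗ
      ((LieAlgebra.ad A g (σ0 (B i))) ∘ₗ σ0 - σ0 ∘ₗ (LieAlgebra.ad A g (B i))) with hηdef
  have hη : ∀ x, η x = ∑ i, ⁅σ0 (c i), θ (B i) x⁆ := by
    intro x
    simp [hηdef, hθdef, LieAlgebra.ad_apply]
  have hηI : ∀ x, η x ∈ I := by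
    intro x
    rw [hη]
    exact Submodule.sum_mem _ fun i _ => I.lie_mem (hθI (B i) x)
  -- the key cohomological identity
  have adsum : ∀ (u : g) (f : Free.ChooseBasisIndex A g → g),
      ⁅u, ∑ i, f i⁆ = ∑ i, ⁅u, f i⁆ := by
    intro u f
    simp only [← LieAlgebra.ad_apply (R := A), map_sum]
  have hθfst : ∀ u w v : g, θ ⁅u, w⁆ v = - θ ⁅w, u⁆ v := by
    intro u w v
    rw [show ⁅u, w⁆ = -⁅w, u⁆ from (lie_skew u w).symm]
    simp only [hθdef, map_neg, neg_lie]
    abel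
  have INV1 : ∀ w u : g, ∑ i, ⁅σ0 ⁅u, c i⁆, θ (B i) w⁆
      = - ∑ i, ⁅σ0 (c i), θ ⁅u, B i⁆ w⁆ := by
    intro w u
    have h := inv_lemma hperf (LinearMap.mk₂ A (fun p q => ⁅σ0 p, θ q w⁆)
      (fun p p' q => by simp only [hθdef, map_add, add_lie])
      (fun a p q => by simp only [hθdef, map_smul, smul_lie])
      (fun p q q' => by
        simp only [hθdef, map_add, add_lie, lie_add, lie_sub]
        abel)
      (fun a p q => by
        simp only [hθdef, map_smul, smul_lie, ← smul_sub, lie_smul])) u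
    simpa using h
  have hMAIN : ∀ x y, ⁅σ0 x, η y⁆ - ⁅σ0 y, η x⁆ - η ⁅x, y⁆ = θ x y := by
    intro x y
    have e1 : ⁅σ0 x, η y⁆ = ∑ i, ⁅σ0 (c i), ⁅σ0 x, θ (B i) y⁆⁆
        + ∑ i, ⁅σ0 ⁅x, c i⁆, θ (B i) y⁆ := by
      rw [hη y, adsum, Finset.sum_congr rfl fun i _ => hML x (c i) _ (hθI (B i) y),
        Finset.sum_add_distrib]
    have e2 : ⁅σ0 y, η x⁆ = ∑ i, ⁅σ0 (c i), ⁅σ0 y, θ (B i) x⁆⁆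
        + ∑ i, ⁅σ0 ⁅y, c i⁆, θ (B i) x⁆ := by
      rw [hη x, adsum, Finset.sum_congr rfl fun i _ => hML y (c i) _ (hθI (B i) x),
        Finset.sum_add_distrib]
    have e3 : η ⁅x, y⁆ = - ∑ i, ⁅σ0 (c i), θ ⁅x, y⁆ (B i)⁆ := by
      rw [hη, ← Finset.sum_neg_distrib]
      refine Finset.sum_congr rfl fun i _ => ?_
      rw [hθanti (B i) ⁅x, y⁆, lie_neg]
    have key : ∀ P Q R S T U : g, P - Q + R - S + T - U = 0
        → Q - R = P + -S - -T - U := by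
      intro P Q R S T U h
      have h1 : Q - R - (P + -S - -T - U) = -(P - Q + R - S + T - U) := by abel
      have h2 : Q - R - (P + -S - -T - U) = 0 := by rw [h1, h, neg_zero]
      exact eq_of_sub_eq_zero h2
    have e4 : ∀ i, ⁅σ0 x, θ (B i) y⁆ - ⁅σ0 y, θ (B i) x⁆
        = ⁅σ0 (B i), θ x y⁆ + θ ⁅x, B i⁆ y - θ ⁅y, B i⁆ x - θ ⁅x, y⁆ (B i) := by
      intro i
      rw [hθfst x (B i) y, hθfst y (B i) x]
      exact key _ _ _ _ _ _ (coc σ0 (B i) x y)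
    have perI : ∀ i, ⁅σ0 (c i), ⁅σ0 x, θ (B i) y⁆⁆ - ⁅σ0 (c i), ⁅σ0 y, θ (B i) x⁆⁆
        = ⁅σ0 (c i), ⁅σ0 (B i), θ x y⁆⁆ + ⁅σ0 (c i), θ ⁅x, B i⁆ y⁆
          - ⁅σ0 (c i), θ ⁅y, B i⁆ x⁆ - ⁅σ0 (c i), θ ⁅x, y⁆ (B i)⁆ := by
      intro i
      rw [← lie_sub, e4 i]
      simp only [lie_add, lie_sub]
    have hsub : ∑ i, ⁅σ0 (c i), ⁅σ0 x, θ (B i) y⁆⁆ - ∑ i, ⁅σ0 (c i), ⁅σ0 y, θ (B i) x⁆⁆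
        = θ x y + ∑ i, ⁅σ0 (c i), θ ⁅x, B i⁆ y⁆ - ∑ i, ⁅σ0 (c i), θ ⁅y, B i⁆ x⁆
          - ∑ i, ⁅σ0 (c i), θ ⁅x, y⁆ (B i)⁆ := by
      rw [← Finset.sum_sub_distrib, Finset.sum_congr rfl fun i _ => perI i]
      simp only [Finset.sum_add_distrib, Finset.sum_sub_distrib]
      rw [hTCAS (θ x y) (hθI x y)]
    have E5 := eq_add_of_sub_eq hsub
    rw [e1, e2, e3, INV1 y x, INV1 x y, E5]
    abel
  -- conclusion
  refine ⟨σ0 - η, fun x y => ?_, fun x => ?_⟩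
  · have h1 : ⁅η x, η y⁆ = 0 := aux_L2 J I hJ hI (hηI x) (hηI y)
    have h3 := hMAIN x y
    simp only [LinearMap.sub_apply, sub_lie, lie_sub, h1]
    rw [← lie_skew (η x) (σ0 y)]
    have : ⁅σ0 x, σ0 y⁆ = θ x y + σ0 ⁅x, y⁆ := by simp [hθdef]
    rw [this, ← h3]
    abel
  · show π ((σ0 - η) x) = σb (π x)
    have : π ((σ0 - η) x) = π (σ0 x) - π (η x) := by
      simp only [LinearMap.sub_apply, hπ]
      exact Submodule.Quotient.mk_sub _
    rw [this, hσ0]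
    have : π (η x) = 0 := (LieSubmodule.Quotient.mk_eq_zero' (N := I)).mpr (hηI x)
    rw [this, sub_zero]

end

/-- Let `A` be a commutative ring, `J` an ideal with `J² = 0`, and `g` a Lie
algebra over `A`, free of finite rank as an `A`-module, whose Killing form is perfect (i.e. the
induced map `g → Hom_A(g, A)` is an isomorphism).  Then every Lie algebra automorphism of
`g/Jg` lifts to a Lie algebra automorphism of `g`. -/
theorem stmt_10 (A : Type*) [CommRing A] (J : Ideal A) (hJ : J * J = ⊥)
    (g : Type*) [LieRing g] [LieAlgebra A g] [Module.Free A g] [Module.Finite A g]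
    (hperf : Function.Bijective (killingForm A g))
    (I : LieIdeal A g) (hI : I.toSubmodule = J • (⊤ : Submodule A g))
    (σb : (g ⧸ I) ≃ₗ⁅A⁆ (g ⧸ I)) :
    ∃ σ : g ≃ₗ⁅A⁆ g, ∀ x : g,
      (LieSubmodule.Quotient.mk (N := I) (σ x)) = σb (LieSubmodule.Quotient.mk (N := I) x) := by
  obtain ⟨σ, hσlie, hσπ⟩ := lift_aux A J hJ g hperf I hI σb
  obtain ⟨ρ, hρlie, hρπ⟩ := lift_aux A J hJ g hperf I hI σb.symm
  have hνI : ∀ x, ρ (σ x) - x ∈ I := by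
    intro x
    rw [← LieSubmodule.Quotient.mk_eq_zero' (N := I),
      show (LieSubmodule.Quotient.mk (N := I) (ρ (σ x) - x))
        = LieSubmodule.Quotient.mk (N := I) (ρ (σ x)) - LieSubmodule.Quotient.mk (N := I) x
        from Submodule.Quotient.mk_sub _, hρπ, hσπ]
    simp
  have hν'I : ∀ x, σ (ρ x) - x ∈ I := by
    intro x
    rw [← LieSubmodule.Quotient.mk_eq_zero' (N := I),
      show (LieSubmodule.Quotient.mk (N := I) (σ (ρ x) - x))
        = LieSubmodule.Quotient.mk (N := I) (σ (ρ x)) - LieSubmodule.Quotient.mk (N := I) x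
        from Submodule.Quotient.mk_sub _, hσπ, hρπ]
    simp
  have keybij : ∀ f : g →ₗ[A] g, (∀ x, f x - x ∈ I) → Function.Bijective f := by
    intro f hf
    have hid : ∀ m ∈ I, f m = m := by
      intro m hm
      have hm' : m ∈ J • (⊤ : Submodule A g) := hI ▸ hm
      refine Submodule.smul_induction_on hm' ?_ ?_
      · intro a ha u _
        have h1 : f (a • u) - a • u = a • (f u - u) := by rw [map_smul, smul_sub]
        have h2 : a • (f u - u) = 0 := aux_hZ J I hJ hI ha (hf u)
        exact eq_of_sub_eq_zero (h1.trans h2)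
      · intro v w hv hw
        rw [map_add, hv, hw]
    constructor
    · intro x y hxy
      have h0 : f (x - y) = 0 := by rw [map_sub, hxy, sub_self]
      have hIm : x - y ∈ I := by
        have h3 := hf (x - y)
        rw [h0, zero_sub] at h3
        rw [← neg_neg (x - y)]
        exact neg_mem h3
      have h4 := hid _ hIm
      rw [h0] at h4
      exact sub_eq_zero.mp h4.symm
    · intro y
      refine ⟨y - (f y - y), ?_⟩
      rw [map_sub, hid _ (hf y)]
      abel
  have hbijρσ : Function.Bijective (ρ ∘ₗ σ) := keybij _ fun x => hνI x
  have hbijσρ : Function.Bijective (σ ∘ₗ ρ) := keybij _ fun x => hν'I x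
  have hσbij : Function.Bijective σ := by
    constructor
    · intro x y h
      have : (ρ ∘ₗ σ) x = (ρ ∘ₗ σ) y := by
        simp only [LinearMap.comp_apply, h]
      exact hbijρσ.1 this
    · intro y
      obtain ⟨x, hx⟩ := hbijσρ.2 y
      exact ⟨ρ x, hx⟩
  let e := LinearEquiv.ofBijective σ hσbij
  refine ⟨{ toLieHom := { σ with map_lie' := fun {x y} => (hσlie x y).symm },
            invFun := e.symm,
            left_inv := e.left_inv,
            right_inv := e.right_inv }, fun x => hσπ x⟩
end

section
/- Let g be a finite-dimensional Lie algebra over a field k whose Killing form is nondegenerate (perfect). Then every derivation of g is inner: for each D : g → g with D([a,b]) = [D(a),b] + [a,D(b)] there exists z ∈ g with D = ad(z). -/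
section

variable {R L : Type*} [CommRing R] [LieRing L] [LieAlgebra R L]

theorem LieAlgebra.IsKilling.of_killingForm_nondegenerate
    (h : (killingForm R L).Nondegenerate) : LieAlgebra.IsKilling R L where
  killingCompl_top_eq_bot := by
    have hker := LinearMap.separatingLeft_iff_ker_eq_bot.mp h.1
    rw [← LieIdeal.coe_killingCompl_top, LieIdeal.toLieSubalgebra_toSubmodule] at hker
    exact (LieSubmodule.toSubmodule_eq_bot _).mp hker

def LieDerivation.ofLeibniz (D : L →ₗ[R] L) (hD : ∀ a b : L, D ⁅a, b⁆ = ⁅D a, b⁆ + ⁅a, D b⁆) :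
    LieDerivation R L L where
  toLinearMap := D
  leibniz' a b := by rw [hD, ← lie_skew b (D a)]; abel

@[simp]
theorem LieDerivation.coe_ofLeibniz (D : L →ₗ[R] L)
    (hD : ∀ a b : L, D ⁅a, b⁆ = ⁅D a, b⁆ + ⁅a, D b⁆) :
    ⇑(LieDerivation.ofLeibniz D hD) = D :=
  rfl

end

/-- Let `g` be a finite-dimensional Lie algebra over a field `k` whose Killing
form is nondegenerate (perfect).  Then every derivation of `g` is inner: for each linear map
`D : g → g` satisfying the Leibniz rule `D ⁅a,b⁆ = ⁅D a, b⁆ + ⁅a, D b⁆` there is `z ∈ g`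
with `D = ad z`. -/
theorem stmt_11 (k : Type*) [Field k]
    (g : Type*) [LieRing g] [LieAlgebra k g] [FiniteDimensional k g]
    (hnd : (killingForm k g).Nondegenerate)
    (D : g →ₗ[k] g)
    (hD : ∀ a b : g, D ⁅a, b⁆ = ⁅D a, b⁆ + ⁅a, D b⁆) :
    ∃ z : g, ∀ b : g, D b = ⁅z, b⁆ := by
  have := LieAlgebra.IsKilling.of_killingForm_nondegenerate hnd
  obtain ⟨z, hz⟩ := LieDerivation.IsKilling.exists_eq_ad (LieDerivation.ofLeibniz D hD)
  exact ⟨z, fun b => by simpa using (DFunLike.congr_fun hz b).symm⟩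
end

section
/- Let k be a field of characteristic 2, n ≥ 1, and let g be the Lie algebra of the special orthogonal group of the quadratic form q = x_0² + x_1 x_{n+1} + ... + x_n x_{2n} on k^{2n+1} (i.e., the Lie algebra of endomorphisms u of k^{2n+1} preserving the associated bilinear form and stabilizing q infinitesimally). Then the span n_n of the elementary matrices e_{0,i} for 1 ≤ i ≤ 2n is an abelian (hence nilpotent) ideal of g, and consequently the Killing form of g is degenerate. -/
/-!
In characteristic 2 the polar form of `q` is the hyperbolic form in the coordinates `1, …, 2n`,
so its radical is the line `k e₀`. Every `u ∈ g` preserves this radical, i.e. its `0`-th column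
is concentrated in the entry `(0, 0)`. Matrices in `n_n` map everything into `k e₀` and kill
`e₀`; hence they lie in `g`, any two of them multiply to zero, and `[u, m]` stays in `n_n` for
`u ∈ g`. A nonzero abelian ideal lies in the kernel of the Killing form.
-/

attribute [local instance 100] LieRing.ofAssociativeRing

open Matrix QuadraticMap

namespace Matrix

variable (R : Type*) {ι : Type*} [CommRing R] [Fintype ι] [DecidableEq ι]

def offDiagRow (i₀ : ι) : Submodule R (Matrix ι ι R) where
  carrier := {M | ∀ a b, (a ≠ i₀ ∨ b = i₀) → M a b = 0}
  add_mem' hM hN a b h := by simp [hM a b h, hN a b h]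
  zero_mem' _ _ _ := rfl
  smul_mem' c M hM a b h := by simp [hM a b h]

variable {R} {i₀ : ι}

lemma span_single_eq_offDiagRow :
    Submodule.span R {M | ∃ i, i ≠ i₀ ∧ M = single i₀ i (1 : R)} = offDiagRow R i₀ := by
  refine le_antisymm (Submodule.span_le.2 ?_) fun M hM => ?_
  · rintro _ ⟨i, hi, rfl⟩ a b hab
    rcases hab with ha | rfl
    · simp [single, Ne.symm ha]
    · simp [single, hi]
  · rw [matrix_eq_sum_single M]
    refine Submodule.sum_mem _ fun a _ => Submodule.sum_mem _ fun b _ => ?_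
    by_cases hab : a ≠ i₀ ∨ b = i₀
    · simp [hM a b hab]
    · push Not at hab
      obtain ⟨rfl, hb⟩ := hab
      rw [← mul_one (M a b), ← smul_eq_mul, ← smul_single]
      exact Submodule.smul_mem _ _ (Submodule.subset_span ⟨b, hb, rfl⟩)

lemma mul_eq_zero_of_mem_offDiagRow {M N : Matrix ι ι R} (hM : M ∈ offDiagRow R i₀)
    (hN : N ∈ offDiagRow R i₀) : M * N = 0 := by
  ext a b
  rw [mul_apply, zero_apply]
  refine Finset.sum_eq_zero fun c _ => ?_
  by_cases hc : c = i₀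
  · rw [hM a c (Or.inr hc), zero_mul]
  · rw [hN c b (Or.inl hc), mul_zero]

lemma lie_eq_zero_of_mem_offDiagRow {M N : Matrix ι ι R} (hM : M ∈ offDiagRow R i₀)
    (hN : N ∈ offDiagRow R i₀) : ⁅M, N⁆ = 0 := by
  rw [Ring.lie_def, mul_eq_zero_of_mem_offDiagRow hM hN, mul_eq_zero_of_mem_offDiagRow hN hM,
    sub_zero]

lemma mulVec_eq_single_of_mem_offDiagRow {M : Matrix ι ι R} (hM : M ∈ offDiagRow R i₀)
    (v : ι → R) : M *ᵥ v = Pi.single i₀ ((M *ᵥ v) i₀) := by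
  ext a
  by_cases ha : a = i₀
  · subst ha; rw [Pi.single_eq_same]
  · rw [Pi.single_eq_of_ne ha]
    exact Finset.sum_eq_zero fun c _ => by simp [hM a c (Or.inl ha)]

lemma lie_mem_offDiagRow {u M : Matrix ι ι R} (hu : ∀ a, a ≠ i₀ → u a i₀ = 0)
    (hM : M ∈ offDiagRow R i₀) : ⁅u, M⁆ ∈ offDiagRow R i₀ := by
  intro a b hab
  have left (c : ι) : u a c * M c b = 0 := by
    by_cases hc : c = i₀
    · rcases hab with ha | rfl
      · rw [hc, hu a ha, zero_mul]
      · rw [hM c b (Or.inr rfl), mul_zero]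
    · rw [hM c b (Or.inl hc), mul_zero]
  have right (c : ι) : M a c * u c b = 0 := by
    rcases hab with ha | rfl
    · rw [hM a c (Or.inl ha), zero_mul]
    · by_cases hc : c = b
      · rw [hM a c (Or.inr hc), zero_mul]
      · rw [hu c hc, mul_zero]
  simp [Ring.lie_def, mul_apply, left, right]

end Matrix

section OddSplitForm

variable {k : Type*} [CommRing k] {n : ℕ}

def lowIdx (j : Fin n) : Fin (2 * n + 1) := ⟨j + 1, by omega⟩

def highIdx (j : Fin n) : Fin (2 * n + 1) := ⟨n + 1 + j, by omega⟩

def oddSplitForm (v : Fin (2 * n + 1) → k) : k := v 0 ^ 2 + ∑ j, v (lowIdx j) * v (highIdx j)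

lemma lowIdx_injective : Function.Injective (lowIdx (n := n)) := fun j j' h => by
  simpa [lowIdx, Fin.ext_iff] using h

lemma highIdx_injective : Function.Injective (highIdx (n := n)) := fun j j' h => by
  simpa [highIdx, Fin.ext_iff] using h

lemma lowIdx_ne_highIdx (j j' : Fin n) : lowIdx j ≠ highIdx j' := by
  simp [lowIdx, highIdx, Fin.ext_iff]; omega

lemma lowIdx_ne_zero (j : Fin n) : lowIdx j ≠ 0 := by
  simp [lowIdx, Fin.ext_iff]

lemma highIdx_ne_zero (j : Fin n) : highIdx j ≠ 0 := by
  simp [highIdx, Fin.ext_iff]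

lemma exists_eq_lowIdx_or_highIdx {a : Fin (2 * n + 1)} (ha : a ≠ 0) :
    (∃ j, a = lowIdx j) ∨ ∃ j, a = highIdx j := by
  have ha' : a.1 ≠ 0 := fun h => ha (Fin.ext h)
  by_cases h : a.1 ≤ n
  · exact Or.inl ⟨⟨a - 1, by omega⟩, by simp only [lowIdx, Fin.ext_iff]; omega⟩
  · exact Or.inr ⟨⟨a - (n + 1), by omega⟩, by simp only [highIdx, Fin.ext_iff]; omega⟩

variable [CharP k 2]

lemma polar_oddSplitForm (v w : Fin (2 * n + 1) → k) :
    polar oddSplitForm v w =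
      ∑ j, (v (lowIdx j) * w (highIdx j) + w (lowIdx j) * v (highIdx j)) := by
  simp only [polar, oddSplitForm, Pi.add_apply, CharTwo.add_sq]
  rw [add_sub_add_comm, add_sub_add_comm, ← Finset.sum_sub_distrib, ← Finset.sum_sub_distrib,
    show v 0 ^ 2 + w 0 ^ 2 - v 0 ^ 2 - w 0 ^ 2 = 0 by ring, zero_add]
  exact Finset.sum_congr rfl fun j _ => by ring

lemma polar_oddSplitForm_single_zero_left (c : k) (w : Fin (2 * n + 1) → k) :
    polar oddSplitForm (Pi.single 0 c) w = 0 := by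
  rw [polar_oddSplitForm]
  exact Finset.sum_eq_zero fun j _ => by simp [lowIdx_ne_zero, highIdx_ne_zero]

lemma polar_oddSplitForm_single_highIdx (v : Fin (2 * n + 1) → k) (j : Fin n) :
    polar oddSplitForm v (Pi.single (highIdx j) 1) = v (lowIdx j) := by
  simp [polar_oddSplitForm, Pi.single_apply, highIdx_injective.eq_iff, lowIdx_ne_highIdx]

lemma polar_oddSplitForm_single_lowIdx (v : Fin (2 * n + 1) → k) (j : Fin n) :
    polar oddSplitForm v (Pi.single (lowIdx j) 1) = v (highIdx j) := by
  simp [polar_oddSplitForm, Pi.single_apply, lowIdx_injective.eq_iff,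
    (lowIdx_ne_highIdx _ _).symm]

lemma apply_eq_zero_of_forall_polar_oddSplitForm_eq_zero {c : Fin (2 * n + 1) → k}
    (hc : ∀ w, polar oddSplitForm c w = 0) {a : Fin (2 * n + 1)} (ha : a ≠ 0) : c a = 0 := by
  rcases exists_eq_lowIdx_or_highIdx ha with ⟨j, rfl⟩ | ⟨j, rfl⟩
  · rw [← polar_oddSplitForm_single_highIdx c j]
    exact hc _
  · rw [← polar_oddSplitForm_single_lowIdx c j]
    exact hc _

/-- `u` maps the radical `k e₀` of the polar form into itself. -/
lemma apply_zero_eq_zero_of_polar_oddSplitForm_skew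
    {u : Matrix (Fin (2 * n + 1)) (Fin (2 * n + 1)) k}
    (hu : ∀ v w, polar oddSplitForm (u *ᵥ v) w + polar oddSplitForm v (u *ᵥ w) = 0)
    {a : Fin (2 * n + 1)} (ha : a ≠ 0) : u a 0 = 0 := by
  have hcol (w) : polar oddSplitForm (u *ᵥ Pi.single 0 1) w = 0 := by
    simpa only [polar_oddSplitForm_single_zero_left, add_zero] using hu (Pi.single 0 1) w
  simpa using apply_eq_zero_of_forall_polar_oddSplitForm_eq_zero hcol ha

lemma polar_oddSplitForm_mulVec_eq_zero_of_mem_offDiagRow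
    {M : Matrix (Fin (2 * n + 1)) (Fin (2 * n + 1)) k} (hM : M ∈ offDiagRow k 0)
    (v w : Fin (2 * n + 1) → k) : polar oddSplitForm v (M *ᵥ w) = 0 := by
  rw [mulVec_eq_single_of_mem_offDiagRow hM, polar_comm, polar_oddSplitForm_single_zero_left]

end OddSplitForm

namespace LieSubalgebra

variable {R L : Type*} [CommRing R] [LieRing L] [LieAlgebra R L]

def lieIdealOfSubmodule (g : LieSubalgebra R L) (N : Submodule R L)
    (hN : ∀ u ∈ g, ∀ a ∈ N, ⁅u, a⁆ ∈ N) : LieIdeal R g where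
  toSubmodule := N.comap g.toSubmodule.subtype
  lie_mem {u a} ha := hN u u.2 a ha

lemma isLieAbelian_lieIdealOfSubmodule (g : LieSubalgebra R L) (N : Submodule R L)
    (hN : ∀ u ∈ g, ∀ a ∈ N, ⁅u, a⁆ ∈ N) (hab : ∀ a ∈ N, ∀ b ∈ N, ⁅a, b⁆ = 0) :
    IsLieAbelian (g.lieIdealOfSubmodule N hN) :=
  ⟨fun a b => Subtype.ext (Subtype.ext (hab _ a.2 _ b.2))⟩

end LieSubalgebra

lemma LieIdeal.killingForm_eq_zero_of_mem {K L : Type*} [Field K] [LieRing L] [LieAlgebra K L]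
    [FiniteDimensional K L] (I : LieIdeal K L) [IsLieAbelian I] {x : L} (hx : x ∈ I) (y : L) :
    killingForm K L x y = 0 := by
  rw [LieModule.traceForm_comm]
  exact (LieIdeal.mem_killingCompl K L ⊤).1 (I.le_killingCompl_top_of_isLieAbelian K L hx) y
    (LieSubmodule.mem_top y)

/-- Let `k` be a field of characteristic 2, `n ≥ 1`, and let `g` be the Lie algebra
of the special orthogonal group of the quadratic form `q = x₀² + x₁x_{n+1} + ⋯ + x_n x_{2n}` on
`k^{2n+1}`: the matrices `u` that preserve the associated (polar) bilinear form `B` of `q` and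
stabilize `q` infinitesimally (`B(v, u v) = 0` for all `v`).  Then the span `n_n` of the
elementary matrices `e_{0,i}`, `1 ≤ i ≤ 2n`, is an abelian (hence nilpotent) ideal of `g`, and
consequently the Killing form of `g` is degenerate. -/
theorem stmt_15 (k : Type*) [Field k] [CharP k 2] (n : ℕ) (hn : 1 ≤ n)
    (q : (Fin (2 * n + 1) → k) → k)
    (hq : ∀ v, q v = v ⟨0, by omega⟩ ^ 2 +
      ∑ i : Fin n, v ⟨i.1 + 1, by have := i.2; omega⟩ * v ⟨n + 1 + i.1, by have := i.2; omega⟩)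
    (B : (Fin (2 * n + 1) → k) → (Fin (2 * n + 1) → k) → k)
    (hB : ∀ v w, B v w = q (v + w) - q v - q w)
    (g : LieSubalgebra k (Matrix (Fin (2 * n + 1)) (Fin (2 * n + 1)) k))
    (hg : ∀ u : Matrix (Fin (2 * n + 1)) (Fin (2 * n + 1)) k,
      u ∈ g ↔ ((∀ v w, B (u.mulVec v) w + B v (u.mulVec w) = 0) ∧ ∀ v, B v (u.mulVec v) = 0))
    (nn : Submodule k (Matrix (Fin (2 * n + 1)) (Fin (2 * n + 1)) k))
    (hnn : nn = Submodule.span k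
      {M | ∃ i : Fin (2 * n + 1), i ≠ ⟨0, by omega⟩ ∧
        M = Matrix.single ⟨0, by omega⟩ i (1 : k)}) :
    (∀ a ∈ nn, a ∈ g) ∧
    (∀ a ∈ nn, ∀ b ∈ nn, ⁅a, b⁆ = 0) ∧
    (∀ u ∈ g, ∀ a ∈ nn, ⁅u, a⁆ ∈ nn) ∧
    ¬ (∀ a : g, (∀ b : g, killingForm k g a b = 0) → a = 0) := by
  obtain rfl : q = oddSplitForm := funext hq
  obtain rfl : B = polar oddSplitForm := funext₂ hB
  set N := offDiagRow k (0 : Fin (2 * n + 1))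
  obtain rfl : nn = N := hnn.trans span_single_eq_offDiagRow
  have mem_g : ∀ a ∈ N, a ∈ g := fun a ha =>
    (hg a).2 ⟨fun v w => by
      rw [polar_comm, polar_oddSplitForm_mulVec_eq_zero_of_mem_offDiagRow ha,
        polar_oddSplitForm_mulVec_eq_zero_of_mem_offDiagRow ha, add_zero],
      fun v => polar_oddSplitForm_mulVec_eq_zero_of_mem_offDiagRow ha v v⟩
  have abelian : ∀ a ∈ N, ∀ b ∈ N, ⁅a, b⁆ = 0 := fun _ ha _ hb =>
    lie_eq_zero_of_mem_offDiagRow ha hb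
  have ideal : ∀ u ∈ g, ∀ a ∈ N, ⁅u, a⁆ ∈ N := fun u hu _ ha =>
    lie_mem_offDiagRow (fun _ => apply_zero_eq_zero_of_polar_oddSplitForm_skew ((hg u).1 hu).1) ha
  refine ⟨mem_g, abelian, ideal, fun hnd => ?_⟩
  let I := g.lieIdealOfSubmodule _ ideal
  have : IsLieAbelian I := g.isLieAbelian_lieIdealOfSubmodule _ ideal abelian
  have hE : single 0 ⟨1, by omega⟩ (1 : k) ∈ N := by
    rw [hnn]
    exact Submodule.subset_span ⟨_, by simp [Fin.ext_iff], rfl⟩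
  have hE0 := congrArg Subtype.val (hnd ⟨_, mem_g _ hE⟩ (I.killingForm_eq_zero_of_mem hE))
  simpa using congr_fun₂ hE0 0 ⟨1, by omega⟩
end

section
/- Let A be a commutative ring, g a Lie algebra over A that is finitely generated projective as an A-module with perfect Killing form, and let m be a g-module on which the Casimir element Ω of the adjoint representation acts as the identity. Then the Lie algebra cohomology groups H^i(g, m) vanish for all i ≥ 0. -/
open CategoryTheory TensorProduct

attribute [local instance 100] LieRing.ofAssociativeRing

variable (A : Type) [CommRing A]
variable (g : Type) [LieRing g] [LieAlgebra A g]

/-- The augmentation homomorphism `U(g) → A`, the lift of the zero Lie algebra map `g → A`. -/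
noncomputable def augmentation : UniversalEnvelopingAlgebra A g →ₐ[A] A :=
  UniversalEnvelopingAlgebra.lift A (0 : g →ₗ⁅A⁆ A)

/-- `A` as the trivial module over the universal enveloping algebra `U(g)`,
via the augmentation. -/
noncomputable instance trivialUEAModule : Module (UniversalEnvelopingAlgebra A g) A :=
  Module.compHom A (augmentation A g).toRingHom

/-!
The Casimir element `Ω` is central in `U(g)`: invariance and symmetry of the Killing form make
`t` an `ad`-invariant tensor, and `[ι x, Ω]` is the image of `(ad x ⊗ 1 + 1 ⊗ ad x) t`.
Multiplication by a central element is an endomorphism of the identity functor of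
`U(g)`-modules. On a projective resolution of `A` it lifts multiplication by `Ω` on `A`, which
is zero, so it is null-homotopic; after applying `Hom(-, m)` it becomes multiplication by `Ω`
on `m`, which is the identity. Hence the identity of `Ext^i(A, m)` is zero.
-/

namespace TensorProduct

open Module

variable {R M N M' N' : Type*} [CommRing R] [AddCommGroup M] [Module R M] [AddCommGroup N]
  [Module R N] [AddCommGroup M'] [Module R M'] [AddCommGroup N'] [Module R N']

theorem dualDistrib_tmul_map (f : Dual R M') (f' : Dual R N') (u : M →ₗ[R] M')
    (v : N →ₗ[R] N') (w : M ⊗[R] N) :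
    dualDistrib R M' N' (f ⊗ₜ f') (map u v w) =
      dualDistrib R M N ((f ∘ₗ u) ⊗ₜ (f' ∘ₗ v)) w := by
  induction w using TensorProduct.induction_on with
  | zero => simp
  | tmul x y => simp [dualDistrib_apply]
  | add x y hx hy => simp only [map_add, hx, hy]

theorem eq_zero_of_forall_dualDistrib_tmul_eq_zero_of_free [Module.Free R M]
    [Module.Finite R M] [Module.Free R N] [Module.Finite R N] {w : M ⊗[R] N}
    (hw : ∀ (f : Dual R M) (f' : Dual R N), dualDistrib R M N (f ⊗ₜ f') w = 0) : w = 0 := by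
  refine (forall_dual_apply_eq_zero_iff R w).mp fun φ => ?_
  obtain ⟨ψ, rfl⟩ := (dualDistribEquiv R M N).surjective φ
  induction ψ using TensorProduct.induction_on with
  | zero => simp
  | tmul f f' => exact hw f f'
  | add ψ ψ' hψ hψ' => rw [map_add, LinearMap.add_apply, hψ, hψ', add_zero]

theorem eq_zero_of_forall_dualDistrib_tmul_eq_zero [Module.Projective R M] [Module.Finite R M]
    [Module.Projective R N] [Module.Finite R N] {w : M ⊗[R] N}
    (hw : ∀ (f : Dual R M) (f' : Dual R N), dualDistrib R M N (f ⊗ₜ f') w = 0) : w = 0 := by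
  obtain ⟨_, p, s, -, -, hps⟩ := Module.Finite.exists_comp_eq_id_of_projective R M
  obtain ⟨_, p', s', -, -, hps'⟩ := Module.Finite.exists_comp_eq_id_of_projective R N
  have hsplit : map p p' (map s s' w) = w := by
    rw [← LinearMap.comp_apply, ← map_comp, hps, hps', map_id, LinearMap.id_apply]
  have hfree : map s s' w = 0 := eq_zero_of_forall_dualDistrib_tmul_eq_zero_of_free
    fun f f' => by rw [dualDistrib_tmul_map]; exact hw _ _
  rw [← hsplit, hfree, map_zero]

end TensorProduct

section InvariantForm

variable {R L : Type*} [CommRing R] [LieRing L] [LieAlgebra R L] {Φ : LinearMap.BilinForm R L}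

theorem LinearMap.IsSymm.dualDistrib_tmul_apply (hΦ : LinearMap.IsSymm Φ) (u v : L)
    (t : L ⊗[R] L) :
    dualDistrib R L L (Φ u ⊗ₜ Φ v) t = dualDistrib R L L (map Φ Φ t) (u ⊗ₜ v) := by
  induction t using TensorProduct.induction_on with
  | zero => simp
  | tmul a c =>
    rw [map_tmul, dualDistrib_apply, dualDistrib_apply, ← hΦ.eq a u, ← hΦ.eq c v]
    rfl
  | add t t' ht ht' => simp only [map_add, LinearMap.add_apply, ht, ht']

theorem map_ad_add_map_ad_eq_zero [Module.Finite R L] [Module.Projective R L]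
    (hsymm : LinearMap.IsSymm Φ) (hinv : Φ.lieInvariant L) (hsurj : Function.Surjective Φ)
    {t : L ⊗[R] L} (ht : dualDistrib R L L (map Φ Φ t) = lift Φ) (x : L) :
    map (LieAlgebra.ad R L x) LinearMap.id t + map LinearMap.id (LieAlgebra.ad R L x) t = 0 := by
  have hpair (u v : L) : dualDistrib R L L (Φ u ⊗ₜ Φ v) t = Φ u v := by
    rw [hsymm.dualDistrib_tmul_apply, ht, lift.tmul]
  have had (y : L) : Φ y ∘ₗ LieAlgebra.ad R L x = Φ (-⁅x, y⁆) := by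
    ext w
    rw [LinearMap.comp_apply, LieAlgebra.ad_apply, map_neg, LinearMap.neg_apply, hinv, neg_neg]
  refine eq_zero_of_forall_dualDistrib_tmul_eq_zero fun f f' => ?_
  obtain ⟨y, rfl⟩ := hsurj f
  obtain ⟨z, rfl⟩ := hsurj f'
  rw [map_add, dualDistrib_tmul_map, dualDistrib_tmul_map, LinearMap.comp_id, LinearMap.comp_id,
    had, had, hpair, hpair, map_neg, LinearMap.neg_apply, LinearMap.map_neg, hinv,
    neg_neg, add_neg_cancel]

end InvariantForm

namespace UniversalEnvelopingAlgebra

variable {R L : Type*} [CommRing R] [LieRing L] [LieAlgebra R L]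

noncomputable def mulι : L ⊗[R] L →ₗ[R] UniversalEnvelopingAlgebra R L :=
  TensorProduct.lift (((LinearMap.mul R _).comp (ι R : L →ₗ⁅R⁆ _).toLinearMap).compl₂
    (ι R : L →ₗ⁅R⁆ _).toLinearMap)

@[simp]
theorem mulι_tmul (a b : L) : mulι (a ⊗ₜ[R] b) = ι R a * ι R b := rfl

theorem ι_mul_mulι_sub_mulι_mul_ι (x : L) (w : L ⊗[R] L) :
    ι R x * mulι w - mulι w * ι R x =
      mulι (map (LieAlgebra.ad R L x) LinearMap.id w +
        map LinearMap.id (LieAlgebra.ad R L x) w) := by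
  have hmaps : (LinearMap.mulLeft R (ι R x) - LinearMap.mulRight R (ι R x)) ∘ₗ mulι =
      mulι ∘ₗ (map (LieAlgebra.ad R L x) LinearMap.id +
        map LinearMap.id (LieAlgebra.ad R L x)) := by
    refine TensorProduct.ext' fun a b => ?_
    simp only [LinearMap.comp_apply, LinearMap.sub_apply, LinearMap.mulLeft_apply,
      LinearMap.mulRight_apply, LinearMap.add_apply, map_tmul, LieAlgebra.ad_apply,
      LinearMap.id_apply, map_add, mulι_tmul, LieHom.map_lie, Ring.lie_def]
    noncomm_ring
  exact LinearMap.congr_fun hmaps w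

theorem commute_of_forall_commute_ι {a : UniversalEnvelopingAlgebra R L}
    (h : ∀ x, Commute (ι R x) a) (u : UniversalEnvelopingAlgebra R L) : Commute u a := by
  obtain ⟨v, rfl⟩ := (RingCon.mkₐ_surjective _ : Function.Surjective (mkAlgHom R L)) u
  induction v using TensorAlgebra.induction with
  | algebraMap r => rw [AlgHom.commutes]; exact Algebra.commutes r a
  | ι x => exact h x
  | mul v v' hv hv' => rw [map_mul]; exact hv.mul_left hv'
  | add v v' hv hv' => rw [map_add]; exact hv.add_left hv'

theorem commute_mulι {w : L ⊗[R] L}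
    (hw : ∀ x, map (LieAlgebra.ad R L x) LinearMap.id w +
      map LinearMap.id (LieAlgebra.ad R L x) w = 0)
    (u : UniversalEnvelopingAlgebra R L) : Commute u (mulι w) :=
  commute_of_forall_commute_ι
    (fun x => sub_eq_zero.mp (by rw [ι_mul_mulι_sub_mulι_mul_ι, hw, map_zero])) u

end UniversalEnvelopingAlgebra

variable {A g} in
theorem augmentation_mulι (w : g ⊗[A] g) :
    augmentation A g (UniversalEnvelopingAlgebra.mulι w) = 0 := by
  induction w using TensorProduct.induction_on with
  | zero => simp
  | tmul a b => simp [augmentation]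
  | add w w' hw hw' => rw [map_add, map_add, hw, hw', add_zero]

namespace CategoryTheory

open Limits

variable {C : Type*} [Category* C]

namespace CatCenter

@[simps]
def appComplex (z : CatCenter C) {ι : Type*} {c : ComplexShape ι} [HasZeroMorphisms C]
    (K : HomologicalComplex C c) : K ⟶ K where
  f i := z.app (K.X i)
  comm' i j _ := (z.naturality (K.d i j)).symm

lemma app_eq_zero_of_iso (z : CatCenter C) [HasZeroMorphisms C] {X Y : C} (e : X ≅ Y)
    (hY : z.app Y = 0) : z.app X = 0 := by
  rw [← Iso.hom_inv_id_assoc e (z.app X), z.naturality, hY]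
  simp

end CatCenter

namespace ProjectiveResolution

variable [Abelian C] {X : C} (P : ProjectiveResolution X)

noncomputable def homotopyAppComplexZero (z : CatCenter C) (hX : z.app X = 0) :
    Homotopy (z.appComplex P.complex) 0 :=
  liftHomotopyZero _ <| by
    refine HomologicalComplex.hom_ext _ _ fun n => ?_
    rw [HomologicalComplex.comp_f, CatCenter.appComplex_f, ← CatCenter.naturality,
      HomologicalComplex.zero_f]
    rcases n with _ | n
    · rw [z.app_eq_zero_of_iso (HomologicalComplex.singleObjXSelf _ 0 X) hX, comp_zero]
    · exact (HomologicalComplex.isZero_single_obj_X _ 0 X (n + 1) (by simp)).eq_of_tgt _ _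

end ProjectiveResolution

variable [Abelian C] [EnoughProjectives C] {R : Type*} [Ring R] [Linear R C]

theorem isZero_Ext_of_catCenter_app (z : CatCenter C) {X Y : C} (hX : z.app X = 0)
    (hY : z.app Y = 𝟙 Y) (n : ℕ) : IsZero (((Ext R C n).obj (Opposite.op X)).obj Y) := by
  let P := ProjectiveResolution.of X
  let F := ((linearYoneda R C).obj Y).rightOp
  have hid : (F.mapHomologicalComplex _).map (z.appComplex P.complex) = 𝟙 _ := by
    refine HomologicalComplex.hom_ext _ _ fun i => Quiver.Hom.unop_inj ?_
    ext (f : P.complex.X i ⟶ Y)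
    show z.app _ ≫ f = f
    rw [← z.naturality, hY, Category.comp_id]
  have h := (F.mapHomotopy (P.homotopyAppComplexZero z hX)).homologyMap_eq n
  rw [hid, HomologicalComplex.homologyMap_id, Functor.map_zero,
    HomologicalComplex.homologyMap_zero] at h
  exact (((IsZero.iff_id_eq_zero _).2 h).unop.of_iso
    (HomologicalComplex.homologyUnop _ n)).of_iso (P.isoExt n Y)

end CategoryTheory

namespace ModuleCat

variable {R : Type*} [Ring R]

@[simps]
def catCenterOfCommute (z : R) (hz : ∀ r, Commute r z) : CatCenter (ModuleCat R) where
  app X := ofHom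
    { toFun x := z • x
      map_add' := smul_add z
      map_smul' r x := by rw [RingHom.id_apply, ← mul_smul, ← mul_smul, (hz r).eq] }
  naturality X Y f := by ext x; exact (f.hom.map_smul z x).symm

theorem isZero_Ext_of_smul {S : Type*} [Ring S] [CategoryTheory.Linear S (ModuleCat R)]
    (z : R) (hz : ∀ r, Commute r z) {X Y : ModuleCat R} (hX : ∀ x : X, z • x = 0)
    (hY : ∀ y : Y, z • y = y) (n : ℕ) :
    Limits.IsZero (((Ext S (ModuleCat R) n).obj (Opposite.op X)).obj Y) :=
  isZero_Ext_of_catCenter_app (catCenterOfCommute z hz) (hom_ext (LinearMap.ext hX))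
    (hom_ext (LinearMap.ext hY)) n

end ModuleCat

/-- Let `A` be a commutative ring, `g` a Lie algebra over `A` that is finitely
generated projective as an `A`-module with perfect Killing form, and let `m` be a `g`-module
(equivalently a `U(g)`-module) on which the Casimir element `Ω` of the adjoint representation
acts as the identity.  Here `Ω ∈ U(g)` is the image of the element `t ∈ g ⊗ g` corresponding to
the Killing form under `φ⁻¹ ⊗ φ⁻¹` (where `φ : g ≅ g*` is induced by the perfect Killing form),
i.e. `t` satisfies `(φ ⊗ φ)(t) = K_g ∈ (g ⊗ g)*`, and `Ω` is obtained from `t` by multiplying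
the two tensor factors inside `U(g)`.  Then the Lie algebra cohomology groups
`H^i(g, m) = Ext^i_{U(g)}(A, m)` vanish for all `i ≥ 0`. -/
theorem stmt_19 [Module.Finite A g] [Module.Projective A g]
    (hperf : Function.Bijective (killingForm A g))
    (t : g ⊗[A] g)
    (ht : TensorProduct.dualDistrib A g g
        ((TensorProduct.map (killingForm A g) (killingForm A g)) t) =
      TensorProduct.lift (killingForm A g))
    (m : Type) [AddCommGroup m] [Module (UniversalEnvelopingAlgebra A g) m]
    (hΩ : ∀ v : m,
      (TensorProduct.lift
        (((LinearMap.mul A (UniversalEnvelopingAlgebra A g)).comp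
            (UniversalEnvelopingAlgebra.ι A : g →ₗ⁅A⁆ _).toLinearMap).compl₂
          (UniversalEnvelopingAlgebra.ι A : g →ₗ⁅A⁆ _).toLinearMap) t) • v = v) :
    ∀ i : ℕ, Subsingleton
      (((Ext ℤ (ModuleCat (UniversalEnvelopingAlgebra A g)) i).obj
          (Opposite.op (ModuleCat.of (UniversalEnvelopingAlgebra A g) A))).obj
        (ModuleCat.of (UniversalEnvelopingAlgebra A g) m)) := by
  intro i
  have hinv := map_ad_add_map_ad_eq_zero (LieModule.traceForm_isSymm A g g)
    (LieModule.traceForm_lieInvariant A g g) hperf.surjective ht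
  have hΩA (a : A) : UniversalEnvelopingAlgebra.mulι t • a = 0 := by
    change augmentation A g _ * a = 0
    rw [augmentation_mulι, zero_mul]
  exact ModuleCat.subsingleton_of_isZero <| ModuleCat.isZero_Ext_of_smul _
    (UniversalEnvelopingAlgebra.commute_mulι hinv) (X := ModuleCat.of _ A) hΩA hΩ i
end
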